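/- Let c ∈ (−1,1), a = √((1+c)/2), b = √((1−c)/2), let A11, A12, A13, A22, A23, A33 be real numbers, and set H12 = A11*A22 − A12², H13 = A11*A33 − A13², H23 = A22*A33 − A23², K = A11*A22*A33 + 2*A12*A13*A23 − A11*A23² − A22*A13² − A33*A12², and ρ = 2(H12 + H13 + H23) − 2c. Define D : ℝ → ℝ by D(l) = (1 − l*A11)·cos(a*l)·cosh(b*l) + (−A22 + l*H12)·(sin(a*l)/a)·cosh(b*l) + (−A33 + l*H13)·cos(a*l)·(sinh(b*l)/b) + (H23 − l*K)·(sin(a*l)/a)·(sinh(b*l)/b). Then the tenth derivative of D at 0 equals (128c⁴ − 80c³ − 96c² + 40c + 8)·H12 + (128c⁴ + 80c³ − 96c² − 40c + 8)·H13 + (16c⁴ − 12c² + 1)·ρ + 16c⁵ − 4c³ − 3c. -/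

import Mathlib

/-!
With `C₁ = cos (a l)`, `S₁ = sin (a l) / a`, `C₂ = cosh (b l)`, `S₂ = sinh (b l) / b` one has
`C₁' = -δ₁ S₁`, `S₁' = C₁`, `C₂' = -δ₂ S₂`, `S₂' = C₂`, so the functions
`Σ (u + v l) · (product of a C or S in each factor)` form an 8-dimensional space closed under
`d/dl`. Differentiation is therefore a linear map on the coefficients, and `D⁽¹⁰⁾(0)` is the
constant coefficient of `C₁C₂` after ten applications of it: a polynomial identity in `c`.
-/

open Real

structure JacobiCoeffs where
  (p₀ p₁ q₀ q₁ r₀ r₁ s₀ s₁ : ℝ)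

namespace JacobiCoeffs

noncomputable def eval (a b : ℝ) (x : JacobiCoeffs) (l : ℝ) : ℝ :=
  (x.p₀ + x.p₁ * l) * cos (a * l) * cosh (b * l)
  + (x.q₀ + x.q₁ * l) * (sin (a * l) / a) * cosh (b * l)
  + (x.r₀ + x.r₁ * l) * cos (a * l) * (sinh (b * l) / b)
  + (x.s₀ + x.s₁ * l) * (sin (a * l) / a) * (sinh (b * l) / b)

def derivStep (δ₁ δ₂ : ℝ) (x : JacobiCoeffs) : JacobiCoeffs where
  p₀ := x.p₁ + x.q₀ + x.r₀
  p₁ := x.q₁ + x.r₁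
  q₀ := x.q₁ - δ₁ * x.p₀ + x.s₀
  q₁ := -δ₁ * x.p₁ + x.s₁
  r₀ := x.r₁ - δ₂ * x.p₀ + x.s₀
  r₁ := -δ₂ * x.p₁ + x.s₁
  s₀ := x.s₁ - δ₂ * x.q₀ - δ₁ * x.r₀
  s₁ := -δ₂ * x.q₁ - δ₁ * x.r₁

variable {a b δ₁ δ₂ : ℝ}

theorem hasDerivAt_eval (ha : a ≠ 0) (hb : b ≠ 0) (hδ₁ : a ^ 2 = δ₁) (hδ₂ : b ^ 2 = -δ₂)
    (x : JacobiCoeffs) (l : ℝ) :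
    HasDerivAt (eval a b x) (eval a b (derivStep δ₁ δ₂ x) l) l := by
  have hal : HasDerivAt (fun l => a * l) a l := by simpa using (hasDerivAt_id l).const_mul a
  have hbl : HasDerivAt (fun l => b * l) b l := by simpa using (hasDerivAt_id l).const_mul b
  have hC₁ := (hasDerivAt_cos (a * l)).comp l hal
  have hS₁ := ((hasDerivAt_sin (a * l)).comp l hal).div_const a
  have hC₂ := (hasDerivAt_cosh (b * l)).comp l hbl
  have hS₂ := ((hasDerivAt_sinh (b * l)).comp l hbl).div_const b
  have affine (u v : ℝ) : HasDerivAt (fun l => u + v * l) v l := by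
    simpa using ((hasDerivAt_id l).const_mul v).const_add u
  refine ((((((affine x.p₀ x.p₁).mul hC₁).mul hC₂).add (((affine x.q₀ x.q₁).mul hS₁).mul hC₂)).add
      (((affine x.r₀ x.r₁).mul hC₁).mul hS₂)).add (((affine x.s₀ x.s₁).mul hS₁).mul hS₂)).congr_deriv ?_
  obtain rfl : δ₂ = -b ^ 2 := by linarith
  subst hδ₁
  simp only [eval, derivStep, Pi.mul_apply, Function.comp_apply]
  field_simp
  ring

theorem iteratedDeriv_eval (ha : a ≠ 0) (hb : b ≠ 0) (hδ₁ : a ^ 2 = δ₁) (hδ₂ : b ^ 2 = -δ₂)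
    (n : ℕ) (x : JacobiCoeffs) :
    iteratedDeriv n (eval a b x) = eval a b ((derivStep δ₁ δ₂)^[n] x) := by
  have hsemiconj : Function.Semiconj (eval a b) (derivStep δ₁ δ₂) deriv := fun x =>
    (funext fun l => (hasDerivAt_eval ha hb hδ₁ hδ₂ x l).deriv).symm
  rw [iteratedDeriv_eq_iterate, hsemiconj.iterate_right n x]

theorem eval_zero (x : JacobiCoeffs) : eval a b x 0 = x.p₀ := by
  simp [eval]

end JacobiCoeffs

open JacobiCoeffs in
theorem detQ_tenth_deriv_S2xH2_general (c : ℝ) (hc : c ∈ Set.Ioo (-1 : ℝ) 1)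
    (a b : ℝ) (ha : a = Real.sqrt ((1 + c)/2)) (hb : b = Real.sqrt ((1 - c)/2))
    (A11 A22 A33 H12 H13 H23 K ρ : ℝ)
    (hρ : ρ = 2*(H12 + H13 + H23) - 2*c)
    (D : ℝ → ℝ)
    (hD : ∀ l : ℝ, D l =
      (1 - l*A11) * Real.cos (a*l) * Real.cosh (b*l)
      + (-A22 + l*H12) * (Real.sin (a*l)/a) * Real.cosh (b*l)
      + (-A33 + l*H13) * Real.cos (a*l) * (Real.sinh (b*l)/b)
      + (H23 - l*K) * (Real.sin (a*l)/a) * (Real.sinh (b*l)/b)) :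
    iteratedDeriv 10 D 0 =
      (128*c^4 - 80*c^3 - 96*c^2 + 40*c + 8)*H12
      + (128*c^4 + 80*c^3 - 96*c^2 - 40*c + 8)*H13
      + (16*c^4 - 12*c^2 + 1)*ρ + 16*c^5 - 4*c^3 - 3*c := by
  obtain ⟨hc₁, hc₂⟩ := hc
  have hplus : 0 < (1 + c) / 2 := by linarith
  have hminus : 0 < (1 - c) / 2 := by linarith
  have hD_eval : D = eval a b ⟨1, -A11, -A22, H12, -A33, H13, H23, -K⟩ := by
    ext l; rw [hD, eval]; ring
  rw [hD_eval, iteratedDeriv_eval (δ₁ := (1 + c) / 2) (δ₂ := -((1 - c) / 2))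
    (by rw [ha]; positivity) (by rw [hb]; positivity)
    (by rw [ha, sq_sqrt hplus.le]) (by rw [hb, sq_sqrt hminus.le, neg_neg]), eval_zero, hρ]
  simp only [Function.iterate_succ_apply', Function.iterate_zero_apply, derivStep]
  ring

theorem detQ_tenth_deriv_S2xH2 (c : ℝ) (hc : c ∈ Set.Ioo (-1 : ℝ) 1)
    (a b : ℝ) (ha : a = Real.sqrt ((1 + c)/2)) (hb : b = Real.sqrt ((1 - c)/2))
    (A11 A12 A13 A22 A23 A33 H12 H13 H23 K ρ : ℝ)
    (hH12 : H12 = A11*A22 - A12^2)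
    (hH13 : H13 = A11*A33 - A13^2)
    (hH23 : H23 = A22*A33 - A23^2)
    (hK : K = A11*A22*A33 + 2*A12*A13*A23 - A11*A23^2 - A22*A13^2 - A33*A12^2)
    (hρ : ρ = 2*(H12 + H13 + H23) - 2*c)
    (D : ℝ → ℝ)
    (hD : ∀ l : ℝ, D l =
      (1 - l*A11) * Real.cos (a*l) * Real.cosh (b*l)
      + (-A22 + l*H12) * (Real.sin (a*l)/a) * Real.cosh (b*l)
      + (-A33 + l*H13) * Real.cos (a*l) * (Real.sinh (b*l)/b)
      + (H23 - l*K) * (Real.sin (a*l)/a) * (Real.sinh (b*l)/b)) :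
    iteratedDeriv 10 D 0 =
      (128*c^4 - 80*c^3 - 96*c^2 + 40*c + 8)*H12
      + (128*c^4 + 80*c^3 - 96*c^2 - 40*c + 8)*H13
      + (16*c^4 - 12*c^2 + 1)*ρ + 16*c^5 - 4*c^3 - 3*c :=
  detQ_tenth_deriv_S2xH2_general c hc a b ha hb A11 A22 A33 H12 H13 H23 K ρ hρ D hD
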